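/- In the module V with operators B₂ = t B₂⁽⁰⁾ + B₂⁽¹⁾ q^{−D−1} as above, and defining U_v^{(ε)} := B₂^{(v₁)} ⋯ B₂^{(v_k)} H_ε for v ∈ {0,1}^k and H_ε := (q;q)_ε S_ε, the identity B₂^ℓ (∑_{v ∈ {0,1}^m} U_v^{(ε)}) = ∑_{v ∈ {0,1}^{m+ℓ}} q^{(1−d)|v|_ℓ + 2n(v)_ℓ} t^{ℓ − |v|_ℓ} U_v^{(ε)} holds, where d = 2m + 2ℓ + ε, |v|_ℓ = v₁ + ⋯ + v_ℓ, and n(v)_ℓ = v₂ + 2v₃ + ⋯ + (ℓ−1)v_ℓ. -/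

import Mathlib

/- The field ℚ(q,t): rational functions in t over the field ℚ(q). -/
noncomputable abbrev K : Type := RatFunc (RatFunc ℚ)
noncomputable def q : K := RatFunc.C RatFunc.X
noncomputable def t : K := RatFunc.X

/- The free ℚ(q,t)-module with basis indexed by pairs (m, n). -/
noncomputable abbrev V : Type := (ℕ × ℕ) →₀ K

noncomputable def S (m n : ℕ) : V := if n ≤ m then Finsupp.single (m, n) 1 else 0

/-- The Pieri product `S_a · S_b = ∑_{ℓ=0}^{b} S_{a+b-ℓ, ℓ}` (for a ≥ b). -/
noncomputable def P (a b : ℕ) : V := ∑ ℓ ∈ Finset.range (b + 1), S (a + b - ℓ) ℓ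

/-- `B₂⁽⁰⁾` on the basis. -/
noncomputable def B0 : V →ₗ[K] V :=
  Finsupp.lift V K (ℕ × ℕ) fun p =>
    (-q ^ (p.1 + 1) * (1 - q ^ (p.2 + 1))) • P (p.1 + 1) (p.2 + 1)
      + (q ^ p.2 * (1 - q ^ (p.1 + 2))) • P (p.1 + 2) p.2

/-- `B₂⁽¹⁾` on the basis. -/
noncomputable def B1 : V →ₗ[K] V :=
  Finsupp.lift V K (ℕ × ℕ) fun p =>
    q ^ (p.1 + p.2 + 1) •
      ((1 - q ^ (p.2 + 1)) • P (p.1 + 1) (p.2 + 1)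
        - (1 - q ^ (p.1 + 2)) • P (p.1 + 2) p.2)

/-- The diagonal operator `q^{-D-1}`: multiplies the basis vector of degree d by `q^{-d-1}`. -/
noncomputable def Qinv : V →ₗ[K] V :=
  Finsupp.lift V K (ℕ × ℕ) fun p => (q ^ (p.1 + p.2 + 1))⁻¹ • (Finsupp.single p 1 : V)

/-- The creation operator `B₂ = t B₂⁽⁰⁾ + B₂⁽¹⁾ q^{-D-1}`. -/
noncomputable def B2 : V →ₗ[K] V := t • B0 + B1 ∘ₗ Qinv

/-- The q-shifted factorial `(q;q)_k`. -/
noncomputable def qPoch (k : ℕ) : K := ∏ i ∈ Finset.range k, (1 - q ^ (i + 1))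

/-- `H_ε = (q;q)_ε S_ε`. -/
noncomputable def H (k : ℕ) : V := qPoch k • S k 0

/-- `U_v^{(ε)} = B₂^{(v₁)} ⋯ B₂^{(v_k)} H_ε`, with `false ↦ B₂⁽⁰⁾` and `true ↦ B₂⁽¹⁾`. -/
noncomputable def U : List Bool → ℕ → V
  | [], ε => H ε
  | b :: v, ε => (if b then B1 else B0) (U v ε)

/-- `|v|_ℓ = v₁ + ⋯ + v_ℓ`. -/
def vAbs (k ℓ : ℕ) (v : Fin k → Bool) : ℕ :=
  ∑ i : Fin k, if i.val < ℓ ∧ v i = true then 1 else 0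

/-- `n(v)_ℓ = v₂ + 2v₃ + ⋯ + (ℓ-1)v_ℓ`. -/
def vN (k ℓ : ℕ) (v : Fin k → Bool) : ℕ :=
  ∑ i : Fin k, if i.val < ℓ ∧ v i = true then i.val else 0

/-!
Every `U_v` with `v` of length `k` is homogeneous of degree `2k + ε`, and `q^{-D-1}` acts on
homogeneous vectors of degree `d` by the scalar `q^{-d-1}`. Hence
`B₂ U_v = t U_{0v} + q^{-(2k+ε+1)} U_{1v}`, and applying `B₂` once more to
`∑_v c_v U_v` just prepends a letter to every word, multiplying its coefficient by `t` or by
`q^{-d-1}`. The coefficients in the statement are exactly the ones satisfying this recursion,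
since prepending a letter raises `n(v)` by `|v|`.
-/

lemma q_ne_zero : q ≠ 0 := by
  simp [q, RatFunc.X_ne_zero]

noncomputable def homogeneous (d : ℕ) : Submodule K V :=
  Finsupp.supported K K {p : ℕ × ℕ | p.1 + p.2 = d}

lemma S_mem_homogeneous (a b : ℕ) : S a b ∈ homogeneous (a + b) := by
  unfold S
  split
  · exact Finsupp.single_mem_supported K 1 rfl
  · exact zero_mem _

lemma P_mem_homogeneous {a b d : ℕ} (h : a + b = d) : P a b ∈ homogeneous d := by
  refine Submodule.sum_mem _ fun ℓ hℓ => ?_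
  subst h
  have hℓb : ℓ ≤ a + b := by have := Finset.mem_range.mp hℓ; omega
  simpa [Nat.sub_add_cancel hℓb] using S_mem_homogeneous (a + b - ℓ) ℓ

lemma lift_mem_homogeneous {f : ℕ × ℕ → V} {k : ℕ}
    (hf : ∀ p : ℕ × ℕ, f p ∈ homogeneous (p.1 + p.2 + k)) {d : ℕ} {x : V}
    (hx : x ∈ homogeneous d) : Finsupp.lift V K (ℕ × ℕ) f x ∈ homogeneous (d + k) := by
  rw [Finsupp.lift_apply, Finsupp.sum]
  refine Submodule.sum_mem _ fun p hp => Submodule.smul_mem _ _ ?_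
  have hpd : p.1 + p.2 = d := (Finsupp.mem_supported K x).mp hx hp
  simpa [hpd] using hf p

lemma B0_mem_homogeneous {d : ℕ} {x : V} (hx : x ∈ homogeneous d) :
    B0 x ∈ homogeneous (d + 2) :=
  lift_mem_homogeneous (fun _ => add_mem
    (Submodule.smul_mem _ _ (P_mem_homogeneous (by ring)))
    (Submodule.smul_mem _ _ (P_mem_homogeneous (by ring)))) hx

lemma B1_mem_homogeneous {d : ℕ} {x : V} (hx : x ∈ homogeneous d) :
    B1 x ∈ homogeneous (d + 2) :=
  lift_mem_homogeneous (fun _ => Submodule.smul_mem _ _ (sub_mem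
    (Submodule.smul_mem _ _ (P_mem_homogeneous (by ring)))
    (Submodule.smul_mem _ _ (P_mem_homogeneous (by ring))))) hx

lemma Qinv_apply_of_mem_homogeneous {d : ℕ} {x : V} (hx : x ∈ homogeneous d) :
    Qinv x = (q ^ (d + 1))⁻¹ • x := by
  rw [homogeneous, Finsupp.supported_eq_span_single] at hx
  induction hx using Submodule.span_induction with
  | mem y hy =>
    obtain ⟨p, hp, rfl⟩ := hy
    have hpd : p.1 + p.2 = d := hp
    rw [Qinv, Finsupp.lift_apply, Finsupp.sum_single_index (by simp), one_smul, hpd]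
  | zero => simp
  | add x y _ _ hx hy => rw [map_add, hx, hy, smul_add]
  | smul c x _ hx => rw [map_smul, hx, smul_comm]

lemma B2_apply_of_mem_homogeneous {d : ℕ} {x : V} (hx : x ∈ homogeneous d) :
    B2 x = t • B0 x + (q ^ (d + 1))⁻¹ • B1 x := by
  simp [B2, Qinv_apply_of_mem_homogeneous hx]

lemma U_mem_homogeneous (v : List Bool) (ε : ℕ) : U v ε ∈ homogeneous (2 * v.length + ε) := by
  induction v with
  | nil => simpa [U, H] using Submodule.smul_mem _ (qPoch ε) (S_mem_homogeneous ε 0)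
  | cons b v ih =>
    rw [List.length_cons, show 2 * (v.length + 1) + ε = 2 * v.length + ε + 2 by ring]
    cases b
    · exact B0_mem_homogeneous ih
    · exact B1_mem_homogeneous ih

lemma B2_apply_U (v : List Bool) (ε : ℕ) :
    B2 (U v ε) = t • U (false :: v) ε + (q ^ (2 * v.length + ε + 1))⁻¹ • U (true :: v) ε :=
  B2_apply_of_mem_homogeneous (U_mem_homogeneous v ε)

lemma B2_apply_sum_smul_U {k : ℕ} (w : (Fin k → Bool) → K) (ε : ℕ) :
    B2 (∑ v : Fin k → Bool, w v • U (List.ofFn v) ε)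
      = ∑ v : Fin (k + 1) → Bool,
          ((if v 0 then (q ^ (2 * k + ε + 1))⁻¹ else t) * w (Fin.tail v)) • U (List.ofFn v) ε := by
  rw [← (Fin.consEquiv fun _ => Bool).sum_comp, Fintype.sum_prod_type, Fintype.sum_bool, map_sum,
    ← Finset.sum_add_distrib]
  refine Finset.sum_congr rfl fun v _ => ?_
  simp only [Fin.consEquiv_apply, Fin.cons_zero, List.ofFn_succ, Fin.cons_succ,
    B2_apply_U, List.length_ofFn, map_smul, smul_add, smul_smul, Bool.false_eq_true, if_true, if_false]
  rw [add_comm, mul_comm t, mul_comm (w v)]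
  rfl

lemma vAbs_zero (k : ℕ) (v : Fin k → Bool) : vAbs k 0 v = 0 := by
  simp [vAbs]

lemma vN_zero (k : ℕ) (v : Fin k → Bool) : vN k 0 v = 0 := by
  simp [vN]

lemma vAbs_succ (k ℓ : ℕ) (v : Fin (k + 1) → Bool) :
    vAbs (k + 1) (ℓ + 1) v = (if v 0 then 1 else 0) + vAbs k ℓ (Fin.tail v) := by
  rw [vAbs, Fin.sum_univ_succ]
  simp only [Fin.val_zero, Fin.val_succ, Nat.add_lt_add_iff_right, Nat.zero_lt_succ, true_and]
  rfl

lemma vN_succ (k ℓ : ℕ) (v : Fin (k + 1) → Bool) :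
    vN (k + 1) (ℓ + 1) v = vN k ℓ (Fin.tail v) + vAbs k ℓ (Fin.tail v) := by
  rw [vN, Fin.sum_univ_succ, Fin.val_zero, ite_self, zero_add, vN, vAbs, ← Finset.sum_add_distrib]
  refine Finset.sum_congr rfl fun i _ => ?_
  by_cases h : (i : ℕ) < ℓ ∧ v i.succ = true <;> simp [Fin.tail, h]

lemma vAbs_le (k ℓ : ℕ) (v : Fin k → Bool) : vAbs k ℓ v ≤ ℓ := by
  induction k generalizing ℓ with
  | zero => simp [vAbs]
  | succ k ih =>
    cases ℓ with
    | zero => simp [vAbs_zero]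
    | succ ℓ =>
      rw [vAbs_succ]
      have := ih ℓ (Fin.tail v)
      split <;> omega

/-- `d` stands for the degree `2k + ε` of `U_v`. -/
noncomputable def weight (d ℓ : ℕ) {k : ℕ} (v : Fin k → Bool) : K :=
  q ^ ((1 - d : ℤ) * vAbs k ℓ v + 2 * vN k ℓ v) * t ^ (ℓ - vAbs k ℓ v)

lemma weight_zero (d : ℕ) {k : ℕ} (v : Fin k → Bool) : weight d 0 v = 1 := by
  simp [weight, vAbs_zero, vN_zero]

lemma weight_succ (d ℓ : ℕ) {k : ℕ} (v : Fin (k + 1) → Bool) :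
    weight (d + 2) (ℓ + 1) v = (if v 0 then (q ^ (d + 1))⁻¹ else t) * weight d ℓ (Fin.tail v) := by
  have hle := vAbs_le k ℓ (Fin.tail v)
  rw [weight, weight, vAbs_succ, vN_succ]
  set a := vAbs k ℓ (Fin.tail v)
  set n := vN k ℓ (Fin.tail v)
  cases v 0 <;> simp only [Bool.false_eq_true, if_true, if_false, zero_add]
  · have hexp : (1 - ((d + 2 : ℕ) : ℤ)) * a + 2 * ((n + a : ℕ) : ℤ) = (1 - d) * a + 2 * n := by
      push_cast; ring
    rw [hexp, show ℓ + 1 - a = ℓ - a + 1 by omega, pow_succ]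
    ring
  · have hexp : (1 - ((d + 2 : ℕ) : ℤ)) * ((1 + a : ℕ) : ℤ) + 2 * ((n + a : ℕ) : ℤ)
        = -((d + 1 : ℕ) : ℤ) + ((1 - d) * a + 2 * n) := by
      push_cast; ring
    rw [hexp, zpow_add₀ q_ne_zero, zpow_neg, zpow_natCast, show ℓ + 1 - (1 + a) = ℓ - a by omega,
      mul_assoc]

lemma B2_pow_sum_U_eq_sum_weight (m ℓ ε : ℕ) :
    (B2 ^ ℓ : Module.End K V) (∑ v : Fin m → Bool, U (List.ofFn v) ε)
      = ∑ v : Fin (m + ℓ) → Bool, weight (2 * m + 2 * ℓ + ε) ℓ v • U (List.ofFn v) ε := by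
  induction ℓ with
  | zero => simp [weight_zero]
  | succ ℓ ih =>
    rw [pow_succ', Module.End.mul_apply, ih, B2_apply_sum_smul_U,
      show 2 * m + 2 * (ℓ + 1) + ε = 2 * m + 2 * ℓ + ε + 2 by ring]
    refine Finset.sum_congr rfl fun v _ => ?_
    rw [weight_succ, show 2 * (m + ℓ) + ε = 2 * m + 2 * ℓ + ε by ring]

theorem B2_pow_sum_U_general (m ℓ ε : ℕ) :
    (B2 ^ ℓ : Module.End K V) (∑ v : Fin m → Bool, U (List.ofFn v) ε)
      = ∑ v : Fin (m + ℓ) → Bool,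
          (q ^ ((1 - (2 * m + 2 * ℓ + ε : ℤ)) * (vAbs (m + ℓ) ℓ v : ℤ)
              + 2 * (vN (m + ℓ) ℓ v : ℤ))
            * t ^ (ℓ - vAbs (m + ℓ) ℓ v)) • U (List.ofFn v) ε := by
  rw [B2_pow_sum_U_eq_sum_weight]
  simp [weight]

/-- Proposition 8 of the paper:
`B₂^ℓ (∑_{v ∈ {0,1}^m} U_v^{(ε)})
  = ∑_{v ∈ {0,1}^{m+ℓ}} q^{(1-d)|v|_ℓ + 2 n(v)_ℓ} t^{ℓ - |v|_ℓ} U_v^{(ε)}`,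
where `d = 2m + 2ℓ + ε`. -/
theorem B2_pow_sum_U (m ℓ ε : ℕ) (hε : ε ≤ 1) :
    (B2 ^ ℓ : Module.End K V) (∑ v : Fin m → Bool, U (List.ofFn v) ε)
      = ∑ v : Fin (m + ℓ) → Bool,
          (q ^ ((1 - (2 * m + 2 * ℓ + ε : ℤ)) * (vAbs (m + ℓ) ℓ v : ℤ)
              + 2 * (vN (m + ℓ) ℓ v : ℤ))
            * t ^ (ℓ - vAbs (m + ℓ) ℓ v)) • U (List.ofFn v) ε :=
  B2_pow_sum_U_general m ℓ ε
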